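/- arXiv:1810.08763 — 2 statements merged into one kernel-verified Lean document; each statement's English description precedes it below -/
import Mathlib

section
/- Let κ < 𝔡 and for each α < κ let F_α be an infinite collection of pairwise disjoint finite subsets of ω and g_α : ⋃F_α → ω. Then there is f : ω → ω such that for each α < κ there are infinitely many X ∈ F_α with g_α(m) < f(m) for all m ∈ X. -/
/-- The dominating number `𝔡`. -/
noncomputable def dNum : Cardinal :=
  sInf {c | ∃ D : Set (ℕ → ℕ), Cardinal.mk ↥D = c ∧
    ∀ f : ℕ → ℕ, ∃ g ∈ D, {n | g n < f n}.Finite}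

/-!
Choose, for each `α` and `n`, a nonempty `X α n ∈ F α` lying above `n`; this is possible because
only finitely many pairwise disjoint sets can meet `{0, …, n - 1}`. Fewer than `𝔡` functions
`n ↦ max (g α '' X α n)` do not dominate, so some `f` exceeds each of them infinitely often.
Replacing `f` by its running maximum, `f n ≤ f m` for every `m ∈ X α n`, so `g α < f` on `X α n`
for infinitely many `n`, and these `X α n` are infinitely many distinct sets since they lie above
arbitrarily large `n`.
-/

lemma dNum_le_mk {D : Set (ℕ → ℕ)} (hD : ∀ f : ℕ → ℕ, ∃ g ∈ D, {n | g n < f n}.Finite) :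
    dNum ≤ Cardinal.mk D :=
  csInf_le' ⟨D, rfl, hD⟩

lemma exists_forall_infinite_lt_of_mk_lt_dNum {ι : Type} (hι : Cardinal.mk ι < dNum)
    (h : ι → ℕ → ℕ) : ∃ f : ℕ → ℕ, ∀ α, {n | h α n < f n}.Infinite := by
  by_contra hnot
  have hD : ∀ f : ℕ → ℕ, ∃ k ∈ Set.range h, {n | k n < f n}.Finite := fun f ↦ by
    obtain ⟨α, hα⟩ := not_forall.1 (not_exists.1 hnot f)
    exact ⟨h α, ⟨α, rfl⟩, Set.not_infinite.1 hα⟩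
  exact ((dNum_le_mk hD).trans Cardinal.mk_range_le).not_gt hι

lemma Set.Pairwise.subsingleton_setOf_mem {α : Type*} {F : Set (Set α)} (hF : F.Pairwise Disjoint)
    (m : α) :
    {X | X ∈ F ∧ m ∈ X}.Subsingleton := by
  rintro X ⟨hX, hmX⟩ Y ⟨hY, hmY⟩
  by_contra hXY
  exact Set.disjoint_left.1 (hF hX hY hXY) hmX hmY

lemma Set.Pairwise.exists_nonempty_forall_le {F : Set (Set ℕ)} (hinf : F.Infinite)
    (hF : F.Pairwise Disjoint) (n : ℕ) : ∃ X ∈ F, X.Nonempty ∧ ∀ m ∈ X, n ≤ m := by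
  have hlow : {X | X ∈ F ∧ ∃ m ∈ X, m < n}.Finite := by
    refine ((Set.finite_Iio n).biUnion fun m _ ↦ (hF.subsingleton_setOf_mem m).finite).subset ?_
    rintro X ⟨hX, m, hmX, hmn⟩
    exact Set.mem_biUnion hmn ⟨hX, hmX⟩
  obtain ⟨X, hXF, hX⟩ := (hinf.sdiff (hlow.insert ∅)).nonempty
  simp only [Set.mem_insert_iff, Set.mem_ofPred_eq, not_or, not_and, not_exists, not_lt] at hX
  exact ⟨X, hXF, Set.nonempty_iff_ne_empty.2 hX.1, hX.2 hXF⟩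

lemma Set.infinite_of_forall_exists_nonempty_forall_le {T : Set (Set ℕ)}
    (hT : ∀ n, ∃ X ∈ T, X.Nonempty ∧ ∀ m ∈ X, n ≤ m) : T.Infinite := by
  intro hfin
  obtain ⟨N, hN⟩ := (hfin.image sInf).bddAbove
  obtain ⟨X, hXT, hXne, hX⟩ := hT (N + 1)
  have := hN ⟨X, hXT, rfl⟩
  have := hX _ (Nat.sInf_mem hXne)
  omega

/-- If `κ < 𝔡` and for each `α < κ`, `F α` is an infinite collection of pairwise
disjoint finite subsets of `ω` with `g α : ⋃ F α → ω`, then there is `f : ω → ω`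
such that for each `α` infinitely many `X ∈ F α` satisfy `g α ↾ X < f ↾ X`. -/
theorem stmt13 (ι : Type) (hι : Cardinal.mk ι < dNum)
    (F : ι → Set (Set ℕ)) (g : ι → ℕ → ℕ)
    (hFinf : ∀ α, (F α).Infinite)
    (hFfin : ∀ α, ∀ X ∈ F α, X.Finite)
    (hFdisj : ∀ α, ∀ X ∈ F α, ∀ Y ∈ F α, X ≠ Y → X ∩ Y = ∅) :
    ∃ f : ℕ → ℕ, ∀ α, {X | X ∈ F α ∧ ∀ m ∈ X, g α m < f m}.Infinite := by
  have hFdisj' : ∀ α, (F α).Pairwise Disjoint := fun α X hX Y hY hXY ↦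
    Set.disjoint_iff_inter_eq_empty.2 (hFdisj α X hX Y hY hXY)
  choose X hXF hXne hXge using fun α ↦ (hFdisj' α).exists_nonempty_forall_le (hFinf α)
  choose b hb using fun α n ↦ ((hFfin α _ (hXF α n)).image (g α)).bddAbove
  obtain ⟨f, hf⟩ := exists_forall_infinite_lt_of_mk_lt_dNum hι b
  refine ⟨fun m ↦ (Finset.range (m + 1)).sup f,
    fun α ↦ Set.infinite_of_forall_exists_nonempty_forall_le fun N ↦ ?_⟩
  obtain ⟨n, hn, hNn⟩ := (hf α).exists_gt N
  refine ⟨X α n, ⟨hXF α n, fun m hm ↦ ?_⟩, hXne α n, fun m hm ↦ hNn.le.trans (hXge α n m hm)⟩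
  calc g α m ≤ b α n := hb α n ⟨m, hm, rfl⟩
    _ < f n := hn
    _ ≤ (Finset.range (m + 1)).sup f :=
      Finset.le_sup (Finset.mem_range.2 (Nat.lt_succ_of_le (hXge α n m hm)))
end

section
/- Assuming CH, there is a MAD family on ω^{<ω} containing all branch-sets {f↾n : n∈ω} for f ∈ ω^ω which cannot be extended to an F_σ ideal (is Laflamme) but is not +-Ramsey. -/
variable {α : Type}

/-- An almost disjoint family on a countable set `α`. -/
def IsADF (𝒜 : Set (Set α)) : Prop :=
  (∀ A ∈ 𝒜, A.Infinite) ∧ ∀ A ∈ 𝒜, ∀ B ∈ 𝒜, A ≠ B → (A ∩ B).Finite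

/-- A maximal almost disjoint family on `α`. -/
def IsMAD (𝒜 : Set (Set α)) : Prop :=
  IsADF 𝒜 ∧ ∀ X : Set α, X.Infinite → ∃ A ∈ 𝒜, (X ∩ A).Infinite

/-- `X ∈ I(𝒜)`: the ideal generated by `𝒜` together with the finite sets. -/
def InIdeal (𝒜 : Set (Set α)) (X : Set α) : Prop :=
  ∃ F : Finset (Set α), ↑F ⊆ 𝒜 ∧ (X \ ⋃ A ∈ F, A).Finite

/-- `X` is `I(𝒜)`-positive. -/
def Positive (𝒜 : Set (Set α)) (X : Set α) : Prop := ¬ InIdeal 𝒜 X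

/-- A tree of finite sequences from `α`, closed under initial segments. -/
def IsTree (T : Set (List α)) : Prop := ∀ s ∈ T, ∀ t, t <+: s → t ∈ T

/-- The successor set `suc_T(s)`. -/
def sucT (T : Set (List α)) (s : List α) : Set α := {a | s ++ [a] ∈ T}

/-- `𝒜` is `+`-Ramsey: every tree all of whose successor sets are `I(𝒜)`-positive
has a branch whose range is `I(𝒜)`-positive. -/
def PlusRamsey (𝒜 : Set (Set α)) : Prop :=
  ∀ T : Set (List α), [] ∈ T → IsTree T → (∀ s ∈ T, Positive 𝒜 (sucT T s)) →
    ∃ f : ℕ → α, (∀ n, (List.range n).map f ∈ T) ∧ Positive 𝒜 (Set.range f)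

/-- The branch-set `f̂ = {f↾n : n ∈ ω} ⊆ ω^{<ω}` of `f ∈ ω^ω`. -/
def branchSet (f : ℕ → ℕ) : Set (List ℕ) := {l | ∃ n, l = (List.range n).map f}

/-- A lower semicontinuous submeasure on `ω^{<ω}`. -/
def IsLSC (φ : Set (List ℕ) → ℕ∞) : Prop :=
  φ ∅ = 0 ∧
  (∀ A B, A ⊆ B → φ A ≤ φ B) ∧
  (∀ A B, φ (A ∪ B) ≤ φ A + φ B) ∧
  (∀ A, φ A = ⨆ (F : Finset (List ℕ)) (_ : ↑F ⊆ A), φ ↑F)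

/-- `𝒜` is Laflamme: `I(𝒜)` cannot be extended to a proper `F_σ` ideal, i.e. there is
no lower semicontinuous submeasure `φ` which is finite on all singletons and all
members of `𝒜` but infinite on `ω^{<ω}`. -/
def Laflamme (𝒜 : Set (Set (List ℕ))) : Prop :=
  ¬ ∃ φ : Set (List ℕ) → ℕ∞, IsLSC φ ∧ φ Set.univ = ⊤ ∧
      (∀ s : List ℕ, φ {s} ≠ ⊤) ∧ ∀ A ∈ 𝒜, φ A ≠ ⊤

/-!
Under CH, the candidate sets `X ⊆ ω^{<ω}` and the lower semicontinuous submeasures `φ` (coded by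
their values on finite sets) can be enumerated in type `ω₁`. On top of the branch sets we run a
transfinite recursion: a candidate `X` is added when it is almost disjoint from everything chosen
so far, which makes the family maximal; for a submeasure `φ` that is finite on singletons, on the
branch sets and on the countably many sets chosen so far, but infinite on `ω^{<ω}`, we add a set
`Y` with `φ Y = ∞` almost disjoint from all of them, so `φ` no longer witnesses an `F_σ` extension.

`Y` is the union of finite pieces of growing measure, no node of a piece extending a node of an
earlier one, so `Y` meets every branch in a finite set. If some branch `f` has `φ [f↾n] = ∞` for
all `n`, the pieces are taken in these cones, off `f`; otherwise every cone of infinite measure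
contains finite sets of large measure made of nodes whose cones have finite measure, and the
pieces avoid the cones of earlier pieces.

Any almost disjoint family containing all branch sets fails to be `+`-Ramsey: in the tree of
strictly `⊑`-increasing sequences of nodes every successor set contains the proper extensions of a
node, which contain almost all of infinitely many branch sets, while a branch of this tree runs
along a single branch set.
-/

open Set

section Branches

variable {α : Type*}

lemma map_range_prefix_map_range_iff (f : ℕ → α) {m n : ℕ} :
    (List.range m).map f <+: (List.range n).map f ↔ m ≤ n := by
  refine ⟨fun h => by simpa using h.length_le, fun h => ?_⟩
  have htake : ((List.range n).map f).take m = (List.range m).map f := by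
    rw [← List.map_take, List.take_range, Nat.min_eq_left h]
  exact htake ▸ List.take_prefix _ _

lemma eq_map_range_of_prefix {f : ℕ → α} {t : List α} {n : ℕ}
    (h : t <+: (List.range n).map f) : t = (List.range t.length).map f := by
  have hlen : t.length ≤ n := by simpa using h.length_le
  conv_lhs => rw [List.prefix_iff_eq_take.mp h]
  rw [← List.map_take, List.take_range, Nat.min_eq_left hlen]

lemma le_length_of_strictChain {s : ℕ → List α} (hs : ∀ n, s n <+: s (n + 1) ∧ s n ≠ s (n + 1))
    (n : ℕ) : n ≤ (s n).length := by
  induction n with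
  | zero => exact Nat.zero_le _
  | succ n ih =>
    have hle := (hs n).1.length_le
    have hne : (s n).length ≠ (s (n + 1)).length := fun h => (hs n).2 ((hs n).1.eq_of_length h)
    omega

lemma exists_branch_of_strictChain {s : ℕ → List α}
    (hs : ∀ n, s n <+: s (n + 1) ∧ s n ≠ s (n + 1)) :
    ∃ g : ℕ → α, ∀ n, s n = (List.range (s n).length).map g := by
  have hpre : ∀ i j, i ≤ j → s i <+: s j := fun i j hij =>
    Nat.le_induction (List.prefix_refl _) (fun j _ ih => ih.trans (hs j).1) j hij
  have hlt : ∀ k, k < (s (k + 1)).length := fun k => le_length_of_strictChain hs (k + 1)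
  refine ⟨fun k => (s (k + 1))[k]'(hlt k), fun i => List.ext_getElem (by simp) ?_⟩
  intro k hk _
  simp only [List.getElem_map, List.getElem_range]
  rcases Nat.le_total i (k + 1) with h | h
  · exact (hpre _ _ h).getElem hk
  · exact ((hpre _ _ h).getElem (hlt k)).symm

lemma exists_branch_of_forall_exists_extension {B : Set (List α)}
    (hB : ∀ s ∈ B, ∃ t ∈ B, s <+: t ∧ s ≠ t) {s₀ : List α} (h₀ : s₀ ∈ B) :
    ∃ g : ℕ → α, ∀ n, ∃ t ∈ B, (List.range n).map g <+: t := by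
  choose! next hnextB hnext using hB
  have hmem : ∀ n, next^[n] s₀ ∈ B := fun n => by
    induction n with
    | zero => exact h₀
    | succ n ih => rw [Function.iterate_succ_apply']; exact hnextB _ ih
  have hchain : ∀ n, next^[n] s₀ <+: next^[n + 1] s₀ ∧ next^[n] s₀ ≠ next^[n + 1] s₀ :=
    fun n => by rw [Function.iterate_succ_apply']; exact hnext _ (hmem n)
  obtain ⟨g, hg⟩ := exists_branch_of_strictChain hchain
  refine ⟨g, fun n => ⟨_, hmem n, ?_⟩⟩
  rw [hg n]
  exact (map_range_prefix_map_range_iff g).mpr (le_length_of_strictChain hchain n)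

end Branches

lemma branchSet_infinite (f : ℕ → ℕ) : (branchSet f).Infinite :=
  infinite_of_injective_forall_mem (f := fun n => (List.range n).map f)
    (fun m n h => by simpa using congrArg List.length h) fun n => ⟨n, rfl⟩

lemma branchSet_inter_finite {f g : ℕ → ℕ} (h : f ≠ g) :
    (branchSet f ∩ branchSet g).Finite := by
  obtain ⟨k, hk⟩ := Function.ne_iff.mp h
  refine ((finite_le_nat k).image fun n => (List.range n).map f).subset ?_
  rintro _ ⟨⟨n, rfl⟩, m, hm⟩
  have hnm : n = m := by simpa using congrArg List.length hm
  subst hnm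
  refine ⟨n, show n ≤ k from not_lt.mp fun hkn => hk ?_, rfl⟩
  exact List.map_inj_left.mp hm k (List.mem_range.mpr hkn)

lemma branchSet_injective : Function.Injective branchSet := fun f g h =>
  by_contra fun hne => branchSet_infinite f (by simpa [h] using branchSet_inter_finite hne)

lemma iUnion_inter_branchSet_finite {F : ℕ → Finset (List ℕ)}
    (hF : ∀ j k, j < k → ∀ t ∈ F j, ∀ s ∈ F k, ¬t <+: s) (g : ℕ → ℕ) :
    ((⋃ k, (F k : Set (List ℕ))) ∩ branchSet g).Finite := by
  rcases eq_empty_or_nonempty ((⋃ k, (F k : Set (List ℕ))) ∩ branchSet g) with h | ⟨_, ht, n, rfl⟩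
  · simp [h]
  obtain ⟨j, hj⟩ := mem_iUnion.mp ht
  -- a node of the branch chosen after stage `j` cannot extend `g↾n`, so it is shorter
  refine (((finite_le_nat j).biUnion fun k _ => (F k).finite_toSet).union
    ((finite_le_nat n).image fun m => (List.range m).map g)).subset ?_
  rintro _ ⟨hs, m, rfl⟩
  obtain ⟨k, hk⟩ := mem_iUnion.mp hs
  rcases le_or_gt k j with hkj | hjk
  · exact Or.inl (mem_biUnion hkj hk)
  · refine Or.inr ⟨m, show m ≤ n from (not_le.mp fun hnm => ?_).le, rfl⟩
    exact hF j k hjk _ hj _ hk ((map_range_prefix_map_range_iff g).mpr hnm)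

section Ideal

variable {α : Type} {𝒜 : Set (Set α)}

lemma Positive.mono {S S' : Set α} (h : Positive 𝒜 S) (hS : S ⊆ S') : Positive 𝒜 S' :=
  fun ⟨F, hF, hfin⟩ => h ⟨F, hF, hfin.subset (sdiff_subset_sdiff_left hS)⟩

lemma inIdeal_of_subset_mem {A X : Set α} (hA : A ∈ 𝒜) (hX : X ⊆ A) : InIdeal 𝒜 X :=
  ⟨{A}, by simpa using hA, by simp [sdiff_eq_empty.mpr hX]⟩

lemma positive_of_infinite_almost_subset (h𝒜 : IsADF 𝒜) {S : Set α}
    (hS : {A ∈ 𝒜 | (A \ S).Finite}.Infinite) : Positive 𝒜 S := by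
  rintro ⟨F, hF𝒜, hfin⟩
  obtain ⟨A, ⟨hA𝒜, hAS⟩, hAF⟩ := (hS.sdiff F.finite_toSet).nonempty
  have hcover : A ⊆ (S \ ⋃ B ∈ F, B) ∪ (A \ S) ∪ ⋃ B ∈ F, A ∩ B := by
    intro a ha
    by_cases haS : a ∈ S
    · by_cases haF : a ∈ ⋃ B ∈ F, B
      · obtain ⟨B, hB, haB⟩ := mem_iUnion₂.mp haF
        exact Or.inr (mem_biUnion hB ⟨ha, haB⟩)
      · exact Or.inl (Or.inl ⟨haS, haF⟩)
    · exact Or.inl (Or.inr ⟨ha, haS⟩)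
  refine h𝒜.1 A hA𝒜 (((hfin.union hAS).union ?_).subset hcover)
  exact F.finite_toSet.biUnion fun B hB => h𝒜.2 A hA𝒜 B (hF𝒜 hB) fun h => hAF (h ▸ hB)

end Ideal

lemma positive_properExtensions {𝒜 : Set (Set (List ℕ))} (h𝒜 : IsADF 𝒜)
    (hbr : ∀ f, branchSet f ∈ 𝒜) (b : List ℕ) : Positive 𝒜 {t | b <+: t ∧ t ≠ b} := by
  let g : ℕ → ℕ → ℕ := fun c k => if h : k < b.length then b[k] else c
  have hgb : ∀ c, (List.range b.length).map (g c) = b := fun c =>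
    List.ext_getElem (by simp) fun k _ hk => by simp [g, hk]
  refine positive_of_infinite_almost_subset h𝒜
    (infinite_of_injective_forall_mem (f := fun c => branchSet (g c)) ?_ fun c => ⟨hbr _, ?_⟩)
  · intro c d hcd
    simpa [g] using congrFun (branchSet_injective hcd) b.length
  · refine ((finite_le_nat b.length).image fun n => (List.range n).map (g c)).subset ?_
    rintro _ ⟨⟨n, rfl⟩, hn⟩
    refine ⟨n, show n ≤ b.length from not_lt.mp fun hbn => hn ⟨?_, fun h => ?_⟩, rfl⟩
    · exact hgb c ▸ (map_range_prefix_map_range_iff _).mpr hbn.le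
    · have hlen := congrArg List.length h
      simp only [List.length_map, List.length_range] at hlen
      omega

theorem not_plusRamsey_of_branchSet_mem {𝒜 : Set (Set (List ℕ))} (h𝒜 : IsADF 𝒜)
    (hbr : ∀ f, branchSet f ∈ 𝒜) : ¬ PlusRamsey 𝒜 := by
  intro hPR
  let T : Set (List (List ℕ)) := {σ | σ.IsChain fun a b => a <+: b ∧ a ≠ b}
  have hsuc : ∀ σ ∈ T, {t | σ.getLastD [] <+: t ∧ t ≠ σ.getLastD []} ⊆ sucT T σ := by
    rintro σ hσ t ⟨h1, h2⟩
    show List.IsChain _ (σ ++ [t])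
    refine List.isChain_append.mpr ⟨hσ, List.isChain_singleton t, fun x hx y hy => ?_⟩
    obtain rfl : x = σ.getLastD [] := by
      rw [List.getLastD_eq_getLast?, Option.mem_def.mp hx]; rfl
    obtain rfl : y = t := by simpa using hy.symm
    exact ⟨h1, fun h => h2 h.symm⟩
  obtain ⟨f, hfT, hpos⟩ := hPR T List.isChain_nil (fun σ hσ τ hτ => List.IsChain.prefix hσ hτ)
    fun σ hσ => (positive_properExtensions h𝒜 hbr _).mono (hsuc σ hσ)
  have hchain : ∀ n, f n <+: f (n + 1) ∧ f n ≠ f (n + 1) := fun n => by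
    have h := hfT (n + 2)
    rw [Set.mem_ofPred_eq, List.isChain_map, List.isChain_range_succ] at h
    exact h n (by omega)
  obtain ⟨g, hg⟩ := exists_branch_of_strictChain hchain
  exact hpos (inIdeal_of_subset_mem (hbr g) (range_subset_iff.mpr fun i => ⟨_, hg i⟩))

lemma exists_seq_of_forall_finset {β : Type*} [DecidableEq β] {Q : β → Prop}
    {P : ℕ → Finset β → Finset β → Prop}
    (h : ∀ k (G : Finset β), (∀ t ∈ G, Q t) → ∃ F : Finset β, (∀ s ∈ F, Q s) ∧ P k G F) :
    ∃ F : ℕ → Finset β, ∀ k, P k ((Finset.range k).biUnion F) (F k) := by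
  choose! next hnextQ hnextP using h
  let G : ℕ → Finset β := fun n => Nat.rec ∅ (fun k G => G ∪ next k G) n
  have hGQ : ∀ n, ∀ t ∈ G n, Q t := by
    intro n
    induction n with
    | zero => simp [G]
    | succ n ih =>
      intro t ht
      rcases Finset.mem_union.mp ht with h | h
      exacts [ih t h, hnextQ n _ ih t h]
  have hG : ∀ n, G n = (Finset.range n).biUnion fun k => next k (G k) := by
    intro n
    induction n with
    | zero => rfl
    | succ n ih =>
      rw [Finset.range_add_one, Finset.biUnion_insert, ← ih, Finset.union_comm]
  refine ⟨fun k => next k (G k), fun k => ?_⟩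
  rw [← hG k]
  exact hnextP k _ (hGQ k)

lemma iUnion_inter_finite_of_disjoint {β : Type*} {F : ℕ → Finset β} {E : ℕ → Set β}
    (hE : Monotone E) (hF : ∀ k, Disjoint (F k : Set β) (E k)) (i : ℕ) :
    ((⋃ k, (F k : Set β)) ∩ E i).Finite := by
  refine ((finite_lt_nat i).biUnion fun k _ => (F k).finite_toSet).subset ?_
  rintro t ⟨ht, htE⟩
  obtain ⟨k, hk⟩ := mem_iUnion.mp ht
  exact mem_biUnion (lt_of_not_ge fun hik => disjoint_left.mp (hF k) hk (hE hik htE)) hk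

def cone {α : Type*} (s : List α) : Set (List α) := {t | s <+: t}

/- The last clause makes the union of the pieces almost disjoint from every branch set. -/
def Extendable (φ : Set (List ℕ) → ℕ∞) (E : ℕ → Set (List ℕ)) (Q : List ℕ → Prop) : Prop :=
  ∀ (k : ℕ) (G : Finset (List ℕ)), (∀ t ∈ G, Q t) → ∃ F : Finset (List ℕ), (∀ s ∈ F, Q s) ∧
    (k : ℕ∞) ≤ φ F ∧ Disjoint (F : Set (List ℕ)) (E k) ∧ ∀ t ∈ G, ∀ s ∈ F, ¬t <+: s

namespace IsLSC

variable {φ : Set (List ℕ) → ℕ∞}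

lemma mono (hφ : IsLSC φ) {A B : Set (List ℕ)} (h : A ⊆ B) : φ A ≤ φ B := hφ.2.1 A B h

lemma union_ne_top (hφ : IsLSC φ) {A B : Set (List ℕ)} (hA : φ A ≠ ⊤) (hB : φ B ≠ ⊤) :
    φ (A ∪ B) ≠ ⊤ :=
  ne_top_of_le_ne_top (WithTop.add_ne_top.mpr ⟨hA, hB⟩) (hφ.2.2.1 A B)

lemma biUnion_ne_top {ι : Type*} (hφ : IsLSC φ) (S : Finset ι) {D : ι → Set (List ℕ)}
    (h : ∀ i ∈ S, φ (D i) ≠ ⊤) : φ (⋃ i ∈ S, D i) ≠ ⊤ := by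
  classical
  induction S using Finset.induction with
  | empty => simp [hφ.1]
  | insert a S _ ih =>
    rw [Finset.set_biUnion_insert]
    exact hφ.union_ne_top (h a (by simp)) (ih fun i hi => h i (by simp [hi]))

lemma ne_top_of_finite (hφ : IsLSC φ) (hsing : ∀ s, φ {s} ≠ ⊤) {A : Set (List ℕ)}
    (hA : A.Finite) : φ A ≠ ⊤ := by
  simpa using hφ.biUnion_ne_top hA.toFinset fun a _ => hsing a

lemma sdiff_eq_top (hφ : IsLSC φ) {A Z : Set (List ℕ)} (hA : φ A = ⊤) (hZ : φ Z ≠ ⊤) :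
    φ (A \ Z) = ⊤ := by
  by_contra h
  exact hφ.union_ne_top h hZ (top_le_iff.mp (hA ▸ hφ.mono (subset_sdiff_union A Z)))

lemma exists_finset_subset_sdiff (hφ : IsLSC φ) {A Z : Set (List ℕ)} (hA : φ A = ⊤)
    (hZ : φ Z ≠ ⊤) (k : ℕ) : ∃ F : Finset (List ℕ), ↑F ⊆ A \ Z ∧ (k : ℕ∞) ≤ φ F := by
  have hk : (k : ℕ∞) < ⨆ (F : Finset (List ℕ)) (_ : ↑F ⊆ A \ Z), φ F := by
    rw [← hφ.2.2.2, hφ.sdiff_eq_top hA hZ]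
    exact ENat.natCast_lt_top k
  obtain ⟨F, hF⟩ := lt_iSup_iff.mp hk
  obtain ⟨hFA, hkF⟩ := lt_iSup_iff.mp hF
  exact ⟨F, hFA, hkF.le⟩

lemma iUnion_eq_top (hφ : IsLSC φ) {F : ℕ → Finset (List ℕ)}
    (hF : ∀ k : ℕ, (k : ℕ∞) ≤ φ (F k)) :
    φ (⋃ k, (F k : Set (List ℕ))) = ⊤ :=
  ENat.eq_top_iff_forall_ge.mpr fun k : ℕ =>
    (hF k).trans (hφ.mono (subset_iUnion (fun j => (F j : Set (List ℕ))) k))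

/- A counterexample node always has a proper extension which is again a counterexample, so the
counterexamples would contain a branch all of whose cones have infinite measure. -/
lemma exists_finset_small_cones (hφ : IsLSC φ) (hsing : ∀ s, φ {s} ≠ ⊤)
    (hnb : ¬∃ f : ℕ → ℕ, ∀ n, φ (cone ((List.range n).map f)) = ⊤) {s : List ℕ}
    (hs : φ (cone s) = ⊤) {Z : Set (List ℕ)} (hZ : φ Z ≠ ⊤) (k : ℕ) :
    ∃ F : Finset (List ℕ), ↑F ⊆ cone s \ Z ∧ (∀ t ∈ F, φ (cone t) ≠ ⊤) ∧ (k : ℕ∞) ≤ φ F := by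
  by_contra hfail
  let B : Set (List ℕ) := {u | φ (cone u) = ⊤ ∧ ¬∃ F : Finset (List ℕ), ↑F ⊆ cone u \ Z ∧
    (∀ t ∈ F, φ (cone t) ≠ ⊤) ∧ (k : ℕ∞) ≤ φ F}
  suffices hB : ∀ u ∈ B, ∃ t ∈ B, u <+: t ∧ u ≠ t by
    obtain ⟨f, hf⟩ := exists_branch_of_forall_exists_extension hB (s₀ := s) ⟨hs, hfail⟩
    refine hnb ⟨f, fun n => ?_⟩
    obtain ⟨t, htB, hft⟩ := hf n
    exact top_le_iff.mp (htB.1 ▸ hφ.mono fun u hu => hft.trans hu)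
  rintro u ⟨hu, hufail⟩
  by_contra hnext
  by_cases hbig : ∃ t, u <+: t ∧ u ≠ t ∧ φ (cone t) = ⊤
  · obtain ⟨t, hut, hne, ht⟩ := hbig
    obtain ⟨F, hFt, hF⟩ := not_not.mp fun h => hnext ⟨t, ⟨ht, h⟩, hut, hne⟩
    exact hufail ⟨F, fun v hv => ⟨hut.trans (hFt hv).1, (hFt hv).2⟩, hF⟩
  · obtain ⟨F, hFu, hkF⟩ := hφ.exists_finset_subset_sdiff hu (hφ.union_ne_top hZ (hsing u)) k
    refine hufail ⟨F, fun v hv => ⟨(hFu hv).1, fun h => (hFu hv).2 (Or.inl h)⟩, ?_, hkF⟩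
    exact fun t ht htop => hbig ⟨t, (hFu ht).1, fun h => (hFu ht).2 (Or.inr h.symm), htop⟩

lemma exists_of_extendable (hφ : IsLSC φ) {E : ℕ → Set (List ℕ)} (hE : Monotone E)
    {Q : List ℕ → Prop} (hext : Extendable φ E Q) :
    ∃ Y, φ Y = ⊤ ∧ (∀ g, (Y ∩ branchSet g).Finite) ∧ ∀ i, (Y ∩ E i).Finite := by
  classical
  obtain ⟨F, hF⟩ := exists_seq_of_forall_finset hext
  refine ⟨⋃ k, (F k : Set (List ℕ)), hφ.iUnion_eq_top fun k => (hF k).1,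
    iUnion_inter_branchSet_finite (fun j k hjk t ht => ?_),
    iUnion_inter_finite_of_disjoint hE fun k => (hF k).2.1⟩
  exact (hF k).2.2 t (Finset.mem_biUnion.mpr ⟨j, Finset.mem_range.mpr hjk, ht⟩)

lemma extendable_of_big_branch (hφ : IsLSC φ) {f : ℕ → ℕ}
    (hf : ∀ n, φ (cone ((List.range n).map f)) = ⊤) (hbr : φ (branchSet f) ≠ ⊤)
    {E : ℕ → Set (List ℕ)} (hE : ∀ k, φ (E k) ≠ ⊤) :
    Extendable φ E (· ∉ branchSet f) := by
  intro k G hG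
  set n := G.sup List.length + 1
  obtain ⟨F, hF, hkF⟩ := hφ.exists_finset_subset_sdiff (hf n) (hφ.union_ne_top hbr (hE k)) k
  refine ⟨F, fun s hs h => (hF hs).2 (Or.inl h), hkF,
    disjoint_left.mpr fun s hs h => (hF hs).2 (Or.inr h), fun t ht s hs hts => ?_⟩
  -- `t` and `f↾n` are prefixes of `s` and `t` is shorter, so `t` lies on the branch
  have hlen : t.length ≤ ((List.range n).map f).length := by
    simpa [n] using Nat.le_succ_of_le (Finset.le_sup (f := List.length) ht)
  exact hG t ht ⟨t.length,
    eq_map_range_of_prefix (List.prefix_of_prefix_length_le hts (hF hs).1 hlen)⟩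

lemma extendable_of_no_big_branch (hφ : IsLSC φ) (huniv : φ univ = ⊤) (hsing : ∀ s, φ {s} ≠ ⊤)
    (hnb : ¬∃ f : ℕ → ℕ, ∀ n, φ (cone ((List.range n).map f)) = ⊤)
    {E : ℕ → Set (List ℕ)} (hE : ∀ k, φ (E k) ≠ ⊤) :
    Extendable φ E (fun t => φ (cone t) ≠ ⊤) := by
  intro k G hG
  have hcone : cone ([] : List ℕ) = univ := eq_univ_of_forall fun _ => List.nil_prefix
  obtain ⟨F, hF, hsmall, hkF⟩ := hφ.exists_finset_small_cones hsing hnb (hcone ▸ huniv)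
    (hφ.union_ne_top (hE k) (hφ.biUnion_ne_top G hG)) k
  exact ⟨F, hsmall, hkF, disjoint_left.mpr fun s hs h => (hF hs).2 (Or.inl h),
    fun t ht s hs hts => (hF hs).2 (Or.inr (mem_biUnion ht hts))⟩

end IsLSC

def IsFresh (𝒟 : Set (Set (List ℕ))) (Y : Set (List ℕ)) : Prop :=
  Y.Infinite ∧ (∀ f, (Y ∩ branchSet f).Finite) ∧ ∀ A ∈ 𝒟, (Y ∩ A).Finite

def Admissible (φ : Set (List ℕ) → ℕ∞) (𝒟 : Set (Set (List ℕ))) : Prop :=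
  IsLSC φ ∧ φ univ = ⊤ ∧ (∀ s, φ {s} ≠ ⊤) ∧ (∀ f, φ (branchSet f) ≠ ⊤) ∧ ∀ A ∈ 𝒟, φ A ≠ ⊤

lemma Admissible.exists_isFresh {φ : Set (List ℕ) → ℕ∞} {𝒟 : Set (Set (List ℕ))}
    (h : Admissible φ 𝒟) (hc : 𝒟.Countable) : ∃ Y, IsFresh 𝒟 Y ∧ φ Y = ⊤ := by
  obtain ⟨hφ, huniv, hsing, hbr, h𝒟⟩ := h
  obtain ⟨D, hD⟩ := (hc.insert ∅).exists_eq_range (insert_nonempty _ _)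
  have hDtop : ∀ i, φ (D i) ≠ ⊤ := by
    intro i
    rcases (hD ▸ mem_range_self i : D i ∈ insert ∅ 𝒟) with h | h
    · simp [h, hφ.1]
    · exact h𝒟 _ h
  have hE : ∀ k, φ (accumulate D k) ≠ ⊤ := by
    intro k
    induction k with
    | zero => rw [accumulate_zero_nat]; exact hDtop 0
    | succ k ih => rw [accumulate_succ]; exact hφ.union_ne_top ih (hDtop _)
  obtain ⟨Y, hY, hYbr, hYE⟩ : ∃ Y, φ Y = ⊤ ∧ (∀ g, (Y ∩ branchSet g).Finite) ∧
      ∀ i, (Y ∩ accumulate D i).Finite := by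
    by_cases hbig : ∃ f : ℕ → ℕ, ∀ n, φ (cone ((List.range n).map f)) = ⊤
    · obtain ⟨f, hf⟩ := hbig
      exact hφ.exists_of_extendable monotone_accumulate (hφ.extendable_of_big_branch hf (hbr f) hE)
    · exact hφ.exists_of_extendable monotone_accumulate
        (hφ.extendable_of_no_big_branch huniv hsing hbig hE)
  refine ⟨Y, ⟨fun hfin => hφ.ne_top_of_finite hsing hfin hY, hYbr, fun A hA => ?_⟩, hY⟩
  obtain ⟨i, rfl⟩ : A ∈ range D := hD ▸ mem_insert_of_mem _ hA
  exact (hYE i).subset (inter_subset_inter_right _ subset_accumulate)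

/-- A code is either the trace of an LSC submeasure on finite sets, which determines it
(`IsLSC.lscExtension_eq`), or a candidate set; there are only `𝔠` codes. -/
abbrev Code : Type := (Finset (List ℕ) → ℕ∞) ⊕ Set (List ℕ)

noncomputable def lscExtension (g : Finset (List ℕ) → ℕ∞) (A : Set (List ℕ)) : ℕ∞ :=
  ⨆ (F : Finset (List ℕ)) (_ : ↑F ⊆ A), g F

lemma IsLSC.lscExtension_eq {φ : Set (List ℕ) → ℕ∞} (hφ : IsLSC φ) :
    lscExtension (fun F => φ F) = φ :=
  funext fun A => (hφ.2.2.2 A).symm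

-- The default `branchSet 0` is harmless: it belongs to the family anyway.
open Classical in
noncomputable def respond (𝒟 : Set (Set (List ℕ))) : Code → Set (List ℕ)
  | .inl g =>
    if h : Admissible (lscExtension g) 𝒟 ∧ 𝒟.Countable then (h.1.exists_isFresh h.2).choose
    else branchSet 0
  | .inr X => if IsFresh 𝒟 X then X else branchSet 0

lemma respond_eq_or_isFresh (𝒟 : Set (Set (List ℕ))) (c : Code) :
    respond 𝒟 c = branchSet 0 ∨ IsFresh 𝒟 (respond 𝒟 c) := by
  rcases c with g | X <;> simp only [respond] <;> split_ifs with h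
  · exact Or.inr (h.1.exists_isFresh h.2).choose_spec.1
  · exact Or.inl rfl
  · exact Or.inr h
  · exact Or.inl rfl

lemma respond_inl_eq_top {𝒟 : Set (Set (List ℕ))} {g : Finset (List ℕ) → ℕ∞}
    (h : Admissible (lscExtension g) 𝒟) (hc : 𝒟.Countable) :
    lscExtension g (respond 𝒟 (.inl g)) = ⊤ := by
  rw [respond, dif_pos ⟨h, hc⟩]
  exact (h.exists_isFresh hc).choose_spec.2

lemma respond_inr_of_isFresh {𝒟 : Set (Set (List ℕ))} {X : Set (List ℕ)} (h : IsFresh 𝒟 X) :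
    respond 𝒟 (.inr X) = X :=
  if_pos h

section Diagonalization

variable {ι : Type} [LinearOrder ι] [WellFoundedLT ι] (e : Code ≃ ι)

noncomputable def stageSet : ι → Set (List ℕ) :=
  IsWellFounded.fix (· < ·) fun x rec => respond (range fun y : Iio x => rec y y.2) (e.symm x)

lemma stageSet_eq (x : ι) : stageSet e x = respond (stageSet e '' Iio x) (e.symm x) := by
  rw [image_eq_range]
  exact IsWellFounded.fix_eq _ _ x

def diagFamily : Set (Set (List ℕ)) := range branchSet ∪ range (stageSet e)

lemma stageSet_eq_or_isFresh (x : ι) :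
    stageSet e x = branchSet 0 ∨ IsFresh (stageSet e '' Iio x) (stageSet e x) := by
  rw [stageSet_eq]
  exact respond_eq_or_isFresh _ _

lemma stageSet_inter_branchSet_finite {x : ι} {f : ℕ → ℕ} (h : stageSet e x ≠ branchSet f) :
    (stageSet e x ∩ branchSet f).Finite := by
  rcases stageSet_eq_or_isFresh e x with h0 | hfresh
  · rw [h0] at h ⊢
    exact branchSet_inter_finite fun hf => h (hf ▸ rfl)
  · exact hfresh.2.1 f

lemma stageSet_inter_finite {x y : ι} (hxy : x < y) (h : stageSet e y ≠ stageSet e x) :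
    (stageSet e y ∩ stageSet e x).Finite := by
  rcases stageSet_eq_or_isFresh e y with h0 | hfresh
  · rw [h0] at h ⊢
    rw [inter_comm]
    exact stageSet_inter_branchSet_finite e h.symm
  · exact hfresh.2.2 _ (mem_image_of_mem _ hxy)

lemma isADF_diagFamily : IsADF (diagFamily e) := by
  refine ⟨?_, ?_⟩
  · rintro A (⟨f, rfl⟩ | ⟨x, rfl⟩)
    · exact branchSet_infinite f
    · rcases stageSet_eq_or_isFresh e x with h | h
      · exact h ▸ branchSet_infinite 0
      · exact h.1
  · rintro A (⟨f, rfl⟩ | ⟨x, rfl⟩) B (⟨g, rfl⟩ | ⟨y, rfl⟩) hne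
    · exact branchSet_inter_finite fun h => hne (h ▸ rfl)
    · rw [inter_comm]
      exact stageSet_inter_branchSet_finite e (Ne.symm hne)
    · exact stageSet_inter_branchSet_finite e hne
    · rcases lt_trichotomy x y with hxy | rfl | hxy
      · rw [inter_comm]
        exact stageSet_inter_finite e hxy (Ne.symm hne)
      · exact absurd rfl hne
      · exact stageSet_inter_finite e hxy hne

lemma isMAD_diagFamily : IsMAD (diagFamily e) := by
  refine ⟨isADF_diagFamily e, fun X hX => ?_⟩
  by_contra! hall
  have hfresh : IsFresh (stageSet e '' Iio (e (.inr X))) X :=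
    ⟨hX, fun f => hall _ (Or.inl ⟨f, rfl⟩), by rintro _ ⟨y, -, rfl⟩; exact hall _ (Or.inr ⟨y, rfl⟩)⟩
  have hstage : stageSet e (e (.inr X)) = X := by
    rw [stageSet_eq, e.symm_apply_apply]
    exact respond_inr_of_isFresh hfresh
  exact hX (by simpa [hstage] using hall _ (Or.inr ⟨e (.inr X), rfl⟩))

lemma laflamme_diagFamily (hι : ∀ x : ι, (Iio x).Countable) : Laflamme (diagFamily e) := by
  rintro ⟨φ, hφ, huniv, hsing, hfin⟩
  set x := e (.inl fun F => φ F)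
  have hadm : Admissible (lscExtension fun F => φ F) (stageSet e '' Iio x) := by
    rw [hφ.lscExtension_eq]
    exact ⟨hφ, huniv, hsing, fun f => hfin _ (Or.inl ⟨f, rfl⟩),
      by rintro _ ⟨y, -, rfl⟩; exact hfin _ (Or.inr ⟨y, rfl⟩)⟩
  have hstage : stageSet e x = respond (stageSet e '' Iio x) (.inl fun F => φ F) := by
    rw [stageSet_eq, e.symm_apply_apply]
  have htop := respond_inl_eq_top hadm ((hι x).image _)
  rw [hφ.lscExtension_eq, ← hstage] at htop
  exact hfin _ (Or.inr ⟨x, rfl⟩) htop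

end Diagonalization

lemma mk_code : Cardinal.mk Code = Cardinal.continuum := by
  rw [Cardinal.mk_sum, Cardinal.mk_arrow, Cardinal.mk_set]
  simp only [Cardinal.lift_id, Cardinal.mk_eq_aleph0, Cardinal.aleph0_power_aleph0,
    Cardinal.two_power_aleph0, Cardinal.continuum_add_self]

lemma mk_toType_ord_aleph_one :
    Cardinal.mk (Cardinal.aleph 1).ord.ToType = Cardinal.aleph 1 := by
  rw [Cardinal.mk_toType, Cardinal.card_ord]

lemma countable_Iio_toType_ord_aleph_one (x : (Cardinal.aleph 1).ord.ToType) :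
    (Iio x).Countable := by
  refine Cardinal.le_aleph0_iff_set_countable.mp (Cardinal.lt_aleph_one_iff.mp ?_)
  have hlt := Cardinal.mk_Iio_lt x (by rw [mk_toType_ord_aleph_one, Ordinal.type_toType])
  rwa [mk_toType_ord_aleph_one] at hlt

lemma nonempty_code_equiv (hCH : Cardinal.continuum.{0} = Cardinal.aleph 1) :
    Nonempty (Code ≃ (Cardinal.aleph.{0} 1).ord.ToType) :=
  Cardinal.eq.mp (mk_code.trans (hCH.trans mk_toType_ord_aleph_one.symm))

/-- (CH) There is a MAD family on `ω^{<ω}` containing all branch-sets which is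
Laflamme but not `+`-Ramsey. -/
theorem stmt16 (hCH : Cardinal.continuum = Cardinal.aleph 1) :
    ∃ 𝒜 : Set (Set (List ℕ)), IsMAD 𝒜 ∧ (∀ f : ℕ → ℕ, branchSet f ∈ 𝒜) ∧
      Laflamme 𝒜 ∧ ¬ PlusRamsey 𝒜 := by
  obtain ⟨e⟩ := nonempty_code_equiv
    (Cardinal.lift_eq_aleph_one.mp (by rw [Cardinal.lift_continuum]; exact hCH))
  have hbr : ∀ f, branchSet f ∈ diagFamily e := fun f => Or.inl ⟨f, rfl⟩
  exact ⟨diagFamily e, isMAD_diagFamily e, hbr,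
    laflamme_diagFamily e countable_Iio_toType_ord_aleph_one,
    not_plusRamsey_of_branchSet_mem (isADF_diagFamily e) hbr⟩
end
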